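/- arXiv:1801.00287 — 4 statements merged into one kernel-verified Lean document; each statement's English description precedes it below -/
import Mathlib

section
/- Let M be a free ℤ-module of finite rank equipped with a nondegenerate symmetric bilinear form B : M × M → ℤ. Let S ⊆ M be a submodule and T = {x ∈ M : B(x, s) = 0 for all s ∈ S}; assume that for every m ∈ M there exist an integer n ≥ 1, s ∈ S and t ∈ T with n·m = s + t. Let ε ∈ {1, −1} and let φ_S be a ℤ-linear automorphism of S with B(φ_S s, φ_S s') = B(s, s') for all s, s' ∈ S, which acts by ε·id on the discriminant group of S in the following sense: for every element x of M ⊗ ℚ lying in the ℚ-linear span of S and satisfying B_ℚ(x, s) ∈ ℤ for all s ∈ S (where B_ℚ denotes the ℚ-bilinear extension of B), one has (φ_S ⊗ ℚ)(x) − ε·x ∈ S. Then there exists a ℤ-linear automorphism ψ of M with B(ψ m, ψ m') = B(m, m') for all m, m' ∈ M, ψ(s) = φ_S(s) for all s ∈ S, and ψ(t) = ε·t for all t ∈ T. -/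
/-- Auxiliary construction for Lemma 2.2: the glued linear map on `M`, for the canonical
`ℤ`-module structure. -/
lemma glue_aux_canonical
    (M : Type*) [AddCommGroup M] [Module.Free ℤ M]
    (B : M →ₗ[ℤ] M →ₗ[ℤ] ℤ)
    (hsymm : ∀ x y : M, B x y = B y x)
    (hnondeg : ∀ x : M, (∀ y : M, B x y = 0) → x = 0)
    (S T : Submodule ℤ M)
    (hT : ∀ x : M, x ∈ T ↔ ∀ s ∈ S, B x s = 0)
    (hindex : ∀ m : M, ∃ (n : ℤ) (s t : M), 1 ≤ n ∧ s ∈ S ∧ t ∈ T ∧ n • m = s + t)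
    (ε : ℤ) (hε : ε = 1 ∨ ε = -1)
    (φS : S ≃ₗ[ℤ] S)
    (hφS : ∀ s s' : S, B (φS s : M) (φS s' : M) = B (s : M) (s' : M))
    (hdisc : ∀ (n : ℤ), 1 ≤ n → ∀ y : S, (∀ s ∈ S, n ∣ B (y : M) s) →
      ∃ z ∈ S, (φS y : M) - ε • (y : M) = n • z) :
    ∃ f : M →ₗ[ℤ] M,
      (∀ m m' : M, B (f m) (f m') = B m m') ∧
      (∀ s : S, f (s : M) = (φS s : M)) ∧
      (∀ t : T, f (t : M) = ε • (t : M)) := by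
  have hεsq : ε * ε = 1 := by rcases hε with h | h <;> simp [h]
  have hBTS : ∀ t ∈ T, ∀ s ∈ S, B t s = 0 := fun t ht => (hT t).1 ht
  have hBST : ∀ s ∈ S, ∀ t ∈ T, B s t = 0 := fun s hs t ht => by
    rw [hsymm]; exact hBTS t ht s hs
  -- S ∩ T = 0
  have hST0 : ∀ x : M, x ∈ S → x ∈ T → x = 0 := by
    intro x hxS hxT
    apply hnondeg
    intro y
    obtain ⟨n, s, t, hn, hs, ht, hdec⟩ := hindex y
    have h1 : B x s = 0 := hBTS x hxT s hs
    have h2 : B x t = 0 := hBST x hxS t ht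
    have h3 : n * B x y = 0 := by
      have h4 : B x (n • y) = B x (s + t) := by rw [hdec]
      simpa [h1, h2] using h4
    have hn0 : n ≠ 0 := by omega
    exact (mul_eq_zero.1 h3).resolve_left hn0
  have tf : ∀ (n : ℤ), n ≠ 0 → ∀ x y : M, n • x = n • y → x = y := by
    intro n hn x y hxy
    exact smul_right_injective M hn hxy
  -- key existence
  have key : ∀ m : M, ∃ x : M, ∃ (n : ℤ) (s : S) (t : T),
      1 ≤ n ∧ n • m = (s : M) + (t : M) ∧ n • x = (φS s : M) + ε • (t : M) := by
    intro m
    obtain ⟨n, s, t, hn, hs, ht, hdec⟩ := hindex m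
    have hdvd : ∀ s' ∈ S, n ∣ B s s' := by
      intro s' hs'
      refine ⟨B m s', ?_⟩
      have h1 : B t s' = 0 := hBTS t ht s' hs'
      have h4 : B (n • m) s' = B (s + t) s' := by rw [hdec]
      simpa [h1] using h4.symm
    obtain ⟨z, hz, hzeq⟩ := hdisc n hn ⟨s, hs⟩ hdvd
    have hzeq' : ((φS ⟨s, hs⟩ : S) : M) - ε • s = n • z := by simpa using hzeq
    refine ⟨z + ε • m, n, ⟨s, hs⟩, ⟨t, ht⟩, hn, hdec, ?_⟩
    rw [smul_add, ← hzeq', smul_comm n ε, hdec, smul_add]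
    abel
  choose f0 hf0 using key
  -- uniqueness of the characterization
  have huniq : ∀ (m x : M), (∃ (n : ℤ) (s : S) (t : T),
      1 ≤ n ∧ n • m = (s : M) + (t : M) ∧ n • x = (φS s : M) + ε • (t : M)) → f0 m = x := by
    rintro m x ⟨n2, s2, t2, hn2, hd2, hx2⟩
    obtain ⟨n1, s1, t1, hn1, hd1, hx1⟩ := hf0 m
    have h0 : n2 • ((s1 : M)) + n2 • ((t1 : M)) = n1 • ((s2 : M)) + n1 • ((t2 : M)) := by
      have h0' : n2 • (n1 • m) = n1 • (n2 • m) := smul_comm n2 n1 m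
      rw [hd1, hd2] at h0'
      simpa only [smul_add] using h0'
    have hims : n2 • ((s1 : M)) - n1 • ((s2 : M)) = 0 := by
      refine hST0 _ (sub_mem (S.smul_mem n2 s1.2) (S.smul_mem n1 s2.2)) ?_
      have he : n2 • ((s1 : M)) - n1 • ((s2 : M)) = n1 • ((t2 : M)) - n2 • ((t1 : M)) := by
        rw [sub_eq_sub_iff_add_eq_add, h0]
        abel
      rw [he]
      exact sub_mem (T.smul_mem n1 t2.2) (T.smul_mem n2 t1.2)
    have hsM : n2 • ((s1 : M)) = n1 • ((s2 : M)) := sub_eq_zero.mp hims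
    have hs12 : n2 • s1 = n1 • s2 := Subtype.ext (by push_cast; exact hsM)
    have htM : n2 • ((t1 : M)) = n1 • ((t2 : M)) := by
      have h5 := h0
      rw [hsM] at h5
      exact add_left_cancel h5
    apply tf (n1 * n2) (by nlinarith)
    calc (n1 * n2) • f0 m = n2 • (n1 • f0 m) := by rw [smul_smul, mul_comm]
      _ = n2 • ((φS s1 : M) + ε • (t1 : M)) := by rw [hx1]
      _ = ((φS (n2 • s1) : S) : M) + ε • (n2 • (t1 : M)) := by
          rw [smul_add, smul_comm n2 ε, map_smul, Submodule.coe_smul]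
      _ = ((φS (n1 • s2) : S) : M) + ε • (n1 • (t2 : M)) := by rw [hs12, htM]
      _ = n1 • ((φS s2 : M) + ε • (t2 : M)) := by
          rw [smul_add, smul_comm n1 ε, map_smul, Submodule.coe_smul]
      _ = n1 • (n2 • x) := by rw [hx2]
      _ = (n1 * n2) • x := by rw [smul_smul]
  -- additivity
  have hadd : ∀ m1 m2 : M, f0 (m1 + m2) = f0 m1 + f0 m2 := by
    intro m1 m2
    obtain ⟨n1, s1, t1, hn1, hd1, hx1⟩ := hf0 m1
    obtain ⟨n2, s2, t2, hn2, hd2, hx2⟩ := hf0 m2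
    refine huniq _ _ ⟨n1 * n2, n2 • s1 + n1 • s2, n2 • t1 + n1 • t2, by nlinarith, ?_, ?_⟩
    · push_cast
      have h5 : (n1 * n2) • (m1 + m2) = n2 • (n1 • m1) + n1 • (n2 • m2) := by
        rw [smul_add, smul_smul, smul_smul, mul_comm n2 n1]
      rw [h5, hd1, hd2, smul_add, smul_add]
      abel
    · have h5 : (n1 * n2) • (f0 m1 + f0 m2) = n2 • (n1 • f0 m1) + n1 • (n2 • f0 m2) := by
        rw [smul_add, smul_smul, smul_smul, mul_comm n2 n1]
      rw [h5, hx1, hx2, map_add, map_smul, map_smul]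
      push_cast
      rw [smul_add, smul_add, smul_comm n2 ε, smul_comm n1 ε, smul_add]
      abel
  -- compatibility with scalars
  have hsmul : ∀ (c : ℤ) (m : M), f0 (c • m) = c • f0 m := by
    intro c m
    obtain ⟨n, s, t, hn, hd, hx⟩ := hf0 m
    refine huniq _ _ ⟨n, c • s, c • t, hn, ?_, ?_⟩
    · push_cast
      rw [smul_comm n c, hd, smul_add]
    · rw [smul_comm n c, hx, map_smul]
      push_cast
      rw [smul_add, smul_comm c ε]
  refine ⟨{ toFun := f0, map_add' := hadd, map_smul' := hsmul }, ?_, ?_, ?_⟩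
  · -- isometry
    intro m m'
    show B (f0 m) (f0 m') = B m m'
    obtain ⟨n, s, t, hn, hd, hx⟩ := hf0 m
    obtain ⟨n', s', t', hn', hd', hx'⟩ := hf0 m'
    have hn0 : (n * n' : ℤ) ≠ 0 := by nlinarith
    apply mul_left_cancel₀ hn0
    have lhs : (n * n') * B (f0 m) (f0 m') = B (n • f0 m) (n' • f0 m') := by
      simp only [map_smul, LinearMap.smul_apply, smul_eq_mul, mul_assoc]
      ring
    have rhs : (n * n') * B m m' = B (n • m) (n' • m') := by
      simp only [map_smul, LinearMap.smul_apply, smul_eq_mul, mul_assoc]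
      ring
    rw [lhs, rhs, hx, hx', hd, hd']
    have e1 : B (φS s : M) (φS s' : M) = B (s : M) (s' : M) := hφS s s'
    have e2 : B (φS s : M) ((t' : M)) = 0 := by
      rw [hsymm]; exact hBTS _ t'.2 _ (φS s).2
    have e3 : B ((t : M)) (φS s' : M) = 0 := hBTS _ t.2 _ (φS s').2
    have e4 : B ((s : M)) ((t' : M)) = 0 := hBST _ s.2 _ t'.2
    have e5 : B ((t : M)) ((s' : M)) = 0 := hBTS _ t.2 _ s'.2
    simp only [map_add, map_smul, LinearMap.add_apply, LinearMap.smul_apply, smul_eq_mul]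
    rw [e1, e2, e3, e4, e5]
    ring_nf
    linear_combination (B (t : M) (t' : M)) * hεsq
  · -- restriction to S
    intro s
    show f0 (s : M) = (φS s : M)
    refine huniq _ _ ⟨1, s, 0, le_refl 1, by simp, by simp⟩
  · -- restriction to T
    intro t
    show f0 (t : M) = ε • (t : M)
    refine huniq _ _ ⟨1, 0, t, le_refl 1, by simp, by simp⟩

/-- The "in particular" clause of Lemma 2.2 of the paper: if an isometry `φ_S` of a sublattice
`S` of a nondegenerate integral lattice `M` acts by `ε·id` (`ε = ±1`) on the discriminant group
`D_S` (expressed concretely: for every `x = y/n ∈ M ⊗ ℚ` in the ℚ-span of `S` with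
`B_ℚ(x, s) ∈ ℤ` for all `s ∈ S`, one has `(φ_S ⊗ ℚ)(x) − ε·x ∈ S`), then `(φ_S, ε·id_T)`
extends to an isometry of `M`, where `T = S⊥`. -/
theorem glue_isometry_eps
    (M : Type*) [AddCommGroup M] [Module ℤ M] [Module.Free ℤ M] [Module.Finite ℤ M]
    (B : M →ₗ[ℤ] M →ₗ[ℤ] ℤ)
    (hsymm : ∀ x y : M, B x y = B y x)
    (hnondeg : ∀ x : M, (∀ y : M, B x y = 0) → x = 0)
    (S T : Submodule ℤ M)
    (hT : ∀ x : M, x ∈ T ↔ ∀ s ∈ S, B x s = 0)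
    (hindex : ∀ m : M, ∃ (n : ℤ) (s t : M), 1 ≤ n ∧ s ∈ S ∧ t ∈ T ∧ n • m = s + t)
    (ε : ℤ) (hε : ε = 1 ∨ ε = -1)
    (φS : S ≃ₗ[ℤ] S)
    (hφS : ∀ s s' : S, B (φS s : M) (φS s' : M) = B (s : M) (s' : M))
    (hdisc : ∀ (n : ℤ), 1 ≤ n → ∀ y : S, (∀ s ∈ S, n ∣ B (y : M) s) →
      ∃ z ∈ S, (φS y : M) - ε • (y : M) = n • z) :
    ∃ ψ : M ≃ₗ[ℤ] M,
      (∀ m m' : M, B (ψ m) (ψ m') = B m m') ∧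
      (∀ s : S, ψ (s : M) = (φS s : M)) ∧
      (∀ t : T, ψ (t : M) = ε • (t : M)) := by
  -- normalize the `ℤ`-module structure to the canonical one
  have hI : ‹Module ℤ M› = AddCommGroup.toIntModule M :=
    Module.ext' _ _ fun n x => int_smul_eq_zsmul _ n x
  subst hI
  have hεsq : ε * ε = 1 := by rcases hε with h | h <;> simp [h]
  obtain ⟨f, hfB, hfS, hfT⟩ :=
    glue_aux_canonical M B hsymm hnondeg S T hT hindex ε hε φS hφS hdisc
  -- the inverse isometry data
  have hφS' : ∀ s s' : S, B (φS.symm s : M) (φS.symm s' : M) = B (s : M) (s' : M) := by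
    intro s s'
    rw [← hφS (φS.symm s) (φS.symm s'), LinearEquiv.apply_symm_apply,
      LinearEquiv.apply_symm_apply]
  have hdisc' : ∀ (n : ℤ), 1 ≤ n → ∀ y : S, (∀ s ∈ S, n ∣ B (y : M) s) →
      ∃ z ∈ S, (φS.symm y : M) - ε • (y : M) = n • z := by
    intro n hn y hy
    have hy' : ∀ s ∈ S, n ∣ B ((φS.symm y : S) : M) s := by
      intro s hs
      have h1 : n ∣ B (y : M) ((φS ⟨s, hs⟩ : S) : M) := hy _ (φS ⟨s, hs⟩).2
      have heq : B ((φS.symm y : S) : M) ((⟨s, hs⟩ : S) : M)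
          = B (y : M) ((φS ⟨s, hs⟩ : S) : M) := by
        rw [← hφS (φS.symm y) ⟨s, hs⟩, LinearEquiv.apply_symm_apply]
      have heq' : B ((φS.symm y : S) : M) s = B (y : M) ((φS ⟨s, hs⟩ : S) : M) := heq
      rw [heq']
      exact h1
    obtain ⟨z, hz, hzeq⟩ := hdisc n hn (φS.symm y) hy'
    rw [LinearEquiv.apply_symm_apply] at hzeq
    refine ⟨(-ε) • z, S.smul_mem _ hz, ?_⟩
    calc (φS.symm y : M) - ε • (y : M)
        = (-ε) • ((y : M) - ε • ((φS.symm y : S) : M)) := by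
          rw [smul_sub, smul_smul, neg_mul, hεsq]
          simp only [neg_smul, one_smul]
          abel
      _ = (-ε) • (n • z) := by rw [hzeq]
      _ = n • ((-ε) • z) := smul_comm _ _ _
  obtain ⟨g, hgB, hgS, hgT⟩ :=
    glue_aux_canonical M B hsymm hnondeg S T hT hindex ε hε φS.symm hφS' hdisc'
  -- f and g are mutually inverse
  have hfg : ∀ m : M, f (g m) = m := by
    intro m
    obtain ⟨n, s, t, hn, hs, ht, hdec⟩ := hindex m
    have hn0 : n ≠ 0 := by omega
    have hdec' : n • m = ((⟨s, hs⟩ : S) : M) + ((⟨t, ht⟩ : T) : M) := hdec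
    apply smul_right_injective M hn0
    show n • f (g m) = n • m
    calc n • f (g m) = f (g (n • m)) := by rw [map_smul, map_smul]
      _ = n • m := by
          rw [hdec', map_add, hgS, hgT, map_add, map_smul, hfS, hfT,
            LinearEquiv.apply_symm_apply, smul_smul, hεsq, one_smul]
  have hgf : ∀ m : M, g (f m) = m := by
    intro m
    obtain ⟨n, s, t, hn, hs, ht, hdec⟩ := hindex m
    have hn0 : n ≠ 0 := by omega
    have hdec' : n • m = ((⟨s, hs⟩ : S) : M) + ((⟨t, ht⟩ : T) : M) := hdec
    apply smul_right_injective M hn0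
    show n • g (f m) = n • m
    calc n • g (f m) = g (f (n • m)) := by rw [map_smul, map_smul]
      _ = n • m := by
          rw [hdec', map_add, hfS, hfT, map_add, map_smul, hgS, hgT,
            LinearEquiv.symm_apply_apply, smul_smul, hεsq, one_smul]
  refine ⟨LinearEquiv.ofLinear f g (LinearMap.ext hfg) (LinearMap.ext hgf), ?_, ?_, ?_⟩
  · intro m m'
    simpa only [LinearEquiv.ofLinear_apply] using hfB m m'
  · intro s
    simpa only [LinearEquiv.ofLinear_apply] using hfS s
  · intro t
    simpa only [LinearEquiv.ofLinear_apply] using hfT t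
end

section
/- With notation as in the context, assume δ ∈ S satisfies B(δ, δ) = 2. Then {H(x, δ) : x ∈ S} = 3·ℰ (i.e. the root δ is chordal) if and only if every s ∈ S can be written as s = a·δ + b·σ(δ) + t with a, b ∈ ℤ and t ∈ S satisfying B(t, δ) = 0 and B(t, σδ) = 0; that is, if and only if S is the orthogonal direct sum of the sublattice R_δ = ℤδ + ℤσδ and its orthogonal complement. -/
/-- Lemma 4.2 of the paper (lattice-theoretic form): a root `δ` is chordal, i.e.
`H(S, δ) = 3·ℰ`, if and only if `S` is the orthogonal direct sum of the degeneracy lattice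
`R_δ = ℤδ + ℤσδ` and its orthogonal complement. -/
theorem chordal_iff_orthogonal_splitting
    (S : Type*) [AddCommGroup S] [Module ℤ S] [Module.Free ℤ S] [Module.Finite ℤ S]
    (B : S →ₗ[ℤ] S →ₗ[ℤ] ℤ)
    (hsymm : ∀ x y : S, B x y = B y x)
    (σ : S ≃ₗ[ℤ] S)
    (hiso : ∀ x y : S, B (σ x) (σ y) = B x y)
    (hord : ∀ x : S, σ (σ x) + σ x + x = 0)
    (ζ θ : ℂ)
    (hζ : ζ = Complex.exp (2 * Real.pi * Complex.I / 3))
    (hθ : θ = ζ - ζ ^ 2)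
    (H : S → S → ℂ)
    (hH : ∀ x y : S, H x y = θ * ((B x (σ y) : ℤ) - ζ * ((B x y : ℤ) : ℂ)))
    (δ : S) (hδ : B δ δ = 2) :
    {z : ℂ | ∃ x : S, H x δ = z} = {z : ℂ | ∃ a b : ℤ, z = 3 * ((a : ℂ) + (b : ℂ) * ζ)} ↔
    ∀ s : S, ∃ (a b : ℤ) (t : S),
      B t δ = 0 ∧ B t (σ δ) = 0 ∧ s = a • δ + b • σ δ + t := by
  have hprim : IsPrimitiveRoot ζ 3 := by
    rw [hζ]; exact Complex.isPrimitiveRoot_exp 3 (by norm_num)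
  have hz3 : ζ ^ 3 = 1 := hprim.pow_eq_one
  have hne : ζ ≠ 1 := hprim.ne_one (by norm_num)
  have hz2 : ζ ^ 2 + ζ + 1 = 0 := by
    have h : (ζ - 1) * (ζ ^ 2 + ζ + 1) = 0 := by linear_combination hz3
    rcases mul_eq_zero.1 h with h | h
    · exact absurd (sub_eq_zero.1 h) hne
    · exact h
  have hσ3 : ∀ x : S, σ (σ (σ x)) = x := by
    intro x
    have h1 := hord x
    have h2 := hord (σ x)
    have h3 : σ (σ (σ x)) - x =
        (σ (σ (σ x)) + σ (σ x) + σ x) - (σ (σ x) + σ x + x) := by abel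
    rw [h2, h1] at h3
    simpa [sub_eq_zero] using h3
  have hBδσ : B δ (σ δ) = -1 := by
    have h := congrArg (B δ) (hord δ)
    simp only [map_add, map_zero] at h
    have h2 : B δ (σ (σ δ)) = B δ (σ δ) := by
      rw [← hiso δ (σ (σ δ)), hσ3 δ, hsymm]
    rw [h2, hδ] at h
    omega
  have hBσδ : B (σ δ) δ = -1 := by rw [hsymm]; exact hBδσ
  have hσσ : B (σ δ) (σ δ) = 2 := by rw [hiso]; exact hδ
  have hHval : ∀ x : S, H x δ =
      ((B x (σ δ) + 2 * B x δ : ℤ) : ℂ) + ((2 * B x (σ δ) + B x δ : ℤ) : ℂ) * ζ := by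
    intro x
    rw [hH, hθ]
    push_cast
    linear_combination ((B x δ : ℂ) * ζ - (B x (σ δ) : ℂ) - 2 * (B x δ : ℂ)) * hz2
  have him : ζ.im ≠ 0 := by
    have hζ' : ζ = Complex.exp ((2 * Real.pi / 3 : ℝ) * Complex.I) := by
      rw [hζ]; congr 1; push_cast; ring
    rw [hζ', Complex.exp_ofReal_mul_I_im]
    have hpi := Real.pi_pos
    have hs : Real.sin (2 * Real.pi / 3) > 0 :=
      Real.sin_pos_of_pos_of_lt_pi (by positivity) (by linarith)
    linarith
  have hext : ∀ p q r s : ℤ, ((p : ℂ) + (q : ℂ) * ζ = (r : ℂ) + (s : ℂ) * ζ) →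
      p = r ∧ q = s := by
    intro p q r s h
    have h1 := congrArg Complex.im h
    have h2 := congrArg Complex.re h
    simp only [Complex.add_im, Complex.mul_im, Complex.add_re, Complex.mul_re,
      Complex.intCast_im, Complex.intCast_re] at h1 h2
    have hq : (q : ℝ) = (s : ℝ) := by
      have : (q : ℝ) * ζ.im = (s : ℝ) * ζ.im := by linarith
      exact mul_right_cancel₀ him this
    have hq' : q = s := by exact_mod_cast hq
    subst hq'
    have hp : (p : ℝ) = (r : ℝ) := by linarith
    exact ⟨by exact_mod_cast hp, rfl⟩
  constructor
  · -- chordal → splitting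
    intro hset s
    have hmem : H s δ ∈ {z : ℂ | ∃ a b : ℤ, z = 3 * ((a : ℂ) + (b : ℂ) * ζ)} := by
      rw [← hset]; exact ⟨s, rfl⟩
    obtain ⟨a, b, hab⟩ := hmem
    rw [hHval s] at hab
    obtain ⟨h1, h2⟩ := hext (B s (σ δ) + 2 * B s δ) (2 * B s (σ δ) + B s δ)
      (3 * a) (3 * b) (by push_cast at hab ⊢; linear_combination hab)
    refine ⟨a, b, s - a • δ - b • σ δ, ?_, ?_, by abel⟩
    · simp only [map_sub, LinearMap.sub_apply, LinearMap.map_smul_of_tower, LinearMap.smul_apply,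
        smul_eq_mul, hδ, hBσδ]
      omega
    · simp only [map_sub, LinearMap.sub_apply, LinearMap.map_smul_of_tower, LinearMap.smul_apply,
        smul_eq_mul, hBδσ, hσσ]
      omega
  · -- splitting → chordal
    intro hsplit
    ext z
    simp only [Set.mem_setOf_eq]
    constructor
    · rintro ⟨x, rfl⟩
      obtain ⟨a, b, t, ht1, ht2, rfl⟩ := hsplit x
      refine ⟨a, b, ?_⟩
      have hn : B (a • δ + b • σ δ + t) δ = 2 * a - b := by
        simp only [map_add, LinearMap.add_apply, LinearMap.map_smul_of_tower, LinearMap.smul_apply,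
          smul_eq_mul, hδ, hBσδ, ht1]
        ring
      have hm : B (a • δ + b • σ δ + t) (σ δ) = -a + 2 * b := by
        simp only [map_add, LinearMap.add_apply, LinearMap.map_smul_of_tower, LinearMap.smul_apply,
          smul_eq_mul, hBδσ, hσσ, ht2]
        ring
      rw [hHval, hn, hm]
      push_cast
      ring
    · rintro ⟨a, b, rfl⟩
      refine ⟨a • δ + b • σ δ, ?_⟩
      have hn : B (a • δ + b • σ δ) δ = 2 * a - b := by
        simp only [map_add, LinearMap.add_apply, LinearMap.map_smul_of_tower, LinearMap.smul_apply,
          smul_eq_mul, hδ, hBσδ]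
        ring
      have hm : B (a • δ + b • σ δ) (σ δ) = -a + 2 * b := by
        simp only [map_add, LinearMap.add_apply, LinearMap.map_smul_of_tower, LinearMap.smul_apply,
          smul_eq_mul, hBδσ, hσσ]
        ring
      rw [hHval, hn, hm]
      push_cast
      ring
end

section
/- With notation as in the context, assume that B is even, i.e. B(x, x) ∈ 2ℤ for every x ∈ S, and let δ ∈ S with B(δ, δ) = 2. If m ∈ S and a, b ∈ ℤ satisfy δ = a·m + b·σ(m), then a² − ab + b² = 1; equivalently, a + bζ is a unit of the Eisenstein integers. -/
/-- Section 4.1 of the paper: in an even lattice with an isometry `σ` of order three without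
nonzero fixed vectors, if a root `δ` (of square `2`) satisfies `δ = a·m + b·σ(m)`, then
`a² − ab + b² = 1`, i.e. `a + bζ` is a unit of the Eisenstein integers. This is the key step
showing that the sublattice `ℰδ` is primitive. -/
theorem root_primitive_eisenstein
    (S : Type*) [AddCommGroup S] [Module ℤ S] [Module.Free ℤ S] [Module.Finite ℤ S]
    (B : S →ₗ[ℤ] S →ₗ[ℤ] ℤ)
    (hsymm : ∀ x y : S, B x y = B y x)
    (σ : S ≃ₗ[ℤ] S)
    (hiso : ∀ x y : S, B (σ x) (σ y) = B x y)
    (hord : ∀ x : S, σ (σ x) + σ x + x = 0)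
    (heven : ∀ x : S, Even (B x x))
    (δ : S) (hδ : B δ δ = 2) :
    ∀ (m : S) (a b : ℤ), δ = a • m + b • σ m → a ^ 2 - a * b + b ^ 2 = 1 := by
  intro m a b hm
  set n : ℤ := B m m with hn
  set p : ℤ := B m (σ m) with hp
  -- σ(σ m) = -σ m - m
  have hσσ : σ (σ m) = -(σ m) - m := by
    have := hord m; linear_combination (norm := abel) this
  -- B (σ m) (σ m) = n
  have h1 : B (σ m) (σ m) = n := hiso m m
  -- B (σ m) m = p
  have h2 : B (σ m) m = p := (hsymm (σ m) m).trans rfl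
  -- p = B (σ m) (σ (σ m)) = -n - p
  have h3 : p = -n - p := by
    have := hiso m (σ m)
    rw [hσσ] at this
    simp only [map_sub, map_neg, LinearMap.sub_apply, LinearMap.neg_apply] at this
    rw [h1, h2] at this
    linarith [this]
  have hn2p : n = -2 * p := by linarith
  -- expand B δ δ
  have hexp : B δ δ = a * a * n + a * b * p + b * a * p + b * b * n := by
    have e1 : ∀ (x y : S) (c : ℤ), B (c • x) y = c * B x y := fun x y c => by
      simp
    have e2 : ∀ (x y : S) (c : ℤ), B x (c • y) = c * B x y := fun x y c => by
      simp
    rw [hm]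
    simp only [map_add, LinearMap.add_apply, e1, e2]
    rw [h1, h2, ← hn, ← hp]
    ring
  rw [hδ] at hexp
  have key : p * (a ^ 2 - a * b + b ^ 2) = -1 := by
    rw [hn2p] at hexp; nlinarith [hexp]
  have hq : (a ^ 2 - a * b + b ^ 2) ∣ 1 := ⟨-p, by linarith [key, mul_comm p (a ^ 2 - a * b + b ^ 2)]⟩
  have := Int.isUnit_iff.mp (isUnit_of_dvd_one hq)
  rcases this with h | h
  · exact h
  · nlinarith [sq_nonneg (2 * a - b), sq_nonneg b]
end

section
/- Let S be a free ℤ-module of finite rank with a symmetric bilinear form B : S × S → ℤ, and let σ be a ℤ-linear automorphism of S satisfying B(σx, σy) = B(x, y) for all x, y ∈ S and σ(σ(x)) + σ(x) + x = 0 for all x ∈ S. For v ∈ S with B(v, v) = −2, let r_v : S → S denote the reflection r_v(x) = x + B(x, v)·v. Let δ ∈ S with B(δ, δ) = −2 (note B(σδ, σδ) = −2 as well) and set τ = r_{σδ} ∘ r_δ ∘ σ. Then: (i) τ(δ) = δ; (ii) τ(σδ) = σδ; (iii) τ(x) = σ(x) for every x ∈ S with B(x, δ) = 0 and B(x, σδ)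 = 0. -/
/-- The computational core of Proposition 4.4 of the paper: `τ = r_{σδ} ∘ r_δ ∘ σ` acts as the
identity on the degeneracy lattice `R_δ = ℤδ + ℤσδ` and as `σ` on its orthogonal
complement. -/
theorem modified_isometry_action
    (S : Type*) [AddCommGroup S] [Module ℤ S] [Module.Free ℤ S] [Module.Finite ℤ S]
    (B : S →ₗ[ℤ] S →ₗ[ℤ] ℤ)
    (hsymm : ∀ x y : S, B x y = B y x)
    (σ : S ≃ₗ[ℤ] S)
    (hiso : ∀ x y : S, B (σ x) (σ y) = B x y)
    (hord : ∀ x : S, σ (σ x) + σ x + x = 0)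
    (δ : S) (hδ : B δ δ = -2)
    (r : S → S → S) (hr : ∀ v x : S, r v x = x + B x v • v)
    (τ : S → S) (hτ : ∀ x : S, τ x = r (σ δ) (r δ (σ x))) :
    τ δ = δ ∧ τ (σ δ) = σ δ ∧
    ∀ x : S, B x δ = 0 → B x (σ δ) = 0 → τ x = σ x := by
  have hσδ : B (σ δ) (σ δ) = -2 := by rw [hiso]; exact hδ
  have h2 : σ (σ δ) = -σ δ - δ := by
    have h := hord δ
    linear_combination (norm := module) h
  have ha : B δ (σ δ) = 1 := by
    have k1 : B (σ δ) (σ (σ δ)) = B δ (σ δ) := hiso δ (σ δ)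
    rw [h2, map_sub, map_neg, hσδ, hsymm (σ δ) δ] at k1
    linarith
  have haσ : B (σ δ) δ = 1 := by rw [hsymm]; exact ha
  refine ⟨?_, ?_, ?_⟩
  · have e1 : r δ (σ δ) = σ δ + δ := by rw [hr, haσ]; simp
    have e2 : B (σ δ + δ) (σ δ) = -1 := by simp [hσδ, ha]
    have e3 : (-1 : ℤ) • σ δ = -σ δ := by simp
    rw [hτ, e1, hr, e2, e3]
    abel
  · have f1 : B (-σ δ - δ) δ = 1 := by simp [haσ, hδ]
    have f2 : r δ (-σ δ - δ) = -σ δ := by rw [hr, f1]; simp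
    have f3 : B (-σ δ) (σ δ) = 2 := by simp [hσδ]
    rw [hτ, h2, f2, hr, f3]
    abel
  · intro x hx1 hx2
    have hx3 : B (σ x) δ = 0 := by
      have h4 : (δ : S) = -σ (σ δ) - σ δ := by
        have h := hord δ
        linear_combination (norm := module) h
      calc B (σ x) δ = B (σ x) (-σ (σ δ) - σ δ) := by rw [← h4]
        _ = 0 := by rw [map_sub, map_neg, hiso, hiso, hx1, hx2]; ring
    have hx4 : B (σ x) (σ δ) = 0 := by rw [hiso]; exact hx1
    rw [hτ, hr δ (σ x), hx3, zero_smul, add_zero, hr, hx4, zero_smul, add_zero]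
end
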